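/- arXiv:2205.03180 — 2 statements merged into one kernel-verified Lean document; each statement's English description precedes it below -/
import Mathlib

section
/- If M is a connected simple coloopless p-matroid with at least two elements, then its es-splitting matroid M^e_{a,b} is connected. -/
open Matrix Set

variable {α : Type*}

/-- The columns of `A` indexed by `S` are linearly independent. -/
def ColIndep {m E F : Type*} [Semiring F] (A : Matrix m E F) (S : Set E) : Prop :=
  LinearIndependent F (fun s : S => Aᵀ s.1)

/-- `M` is the vector matroid of the matrix `A` (ground set all columns). -/
def IsVectorMatroid {m E F : Type*} [Semiring F] (M : Matroid E) (A : Matrix m E F) : Prop :=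
  M.E = Set.univ ∧ ∀ S : Set E, M.Indep S ↔ ColIndep A S

/-- The splitting matrix `A_{a,b}`: `A` with an extra row having `α` in columns `a`, `b`
and `0` elsewhere. -/
def splitMatrix {m E F : Type*} [Zero F] [DecidableEq E] (A : Matrix m E F) (a b : E) (α : F) :
    Matrix (m ⊕ Unit) E F :=
  Matrix.of fun i j =>
    Sum.elim (fun i' => A i' j) (fun _ => if j = a ∨ j = b then α else 0) i

/-- The column `z = (0,…,0,α)ᵀ`. -/
def zColumn {m F : Type*} [Zero F] (α : F) : m ⊕ Unit → F :=
  Sum.elim (fun _ => 0) (fun _ => α)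

/-- The es-splitting matrix `A^e_{a,b}`: the splitting matrix with two extra columns,
`Sum.inr 0 ↦ z = (0,…,0,α)ᵀ` and `Sum.inr 1 ↦ γ = e - z`. -/
def esMatrix {m E F : Type*} [Ring F] [DecidableEq E] (A : Matrix m E F) (a b e : E) (α : F) :
    Matrix (m ⊕ Unit) (E ⊕ Fin 2) F :=
  Matrix.of fun i j =>
    Sum.elim (fun x => splitMatrix A a b α i x)
      (fun k => if k = (0 : Fin 2) then zColumn α i
                else splitMatrix A a b α i e - zColumn α i) j

/-- A circuit of a matroid: a minimal dependent set. -/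
def IsCircuit (M : Matroid α) (C : Set α) : Prop :=
  M.Dep C ∧ ∀ D, D ⊂ C → M.Indep D

/-- The (ℕ-valued) rank of a set in a matroid: the largest size of an independent subset. -/
noncomputable def rk (M : Matroid α) (X : Set α) : ℕ :=
  sSup {n | ∃ I, I ⊆ X ∧ M.Indep I ∧ I.ncard = n}

/-- Every element lies in some circuit. -/
def Coloopless (M : Matroid α) : Prop :=
  ∀ x ∈ M.E, ∃ C, IsCircuit M C ∧ x ∈ C

/-- A simple matroid: every subset of the ground set with at most two elements is independent. -/
def SimpleMatroid (M : Matroid α) : Prop :=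
  ∀ X ⊆ M.E, X.ncard ≤ 2 → M.Indep X

/-- A matroid is connected if every two distinct elements lie in a common circuit. -/
def ConnectedMatroid (M : Matroid α) : Prop :=
  ∀ x ∈ M.E, ∀ y ∈ M.E, x ≠ y → ∃ C, IsCircuit M C ∧ x ∈ C ∧ y ∈ C

/-- A `k`-separation of `M`: a partition `{S, T}` of the ground set with `|S|, |T| ≥ k` and
`r(S) + r(T) - r(M) < k`. -/
def KSeparation (M : Matroid α) (k : ℕ) (S T : Set α) : Prop :=
  S ∪ T = M.E ∧ Disjoint S T ∧ k ≤ S.ncard ∧ k ≤ T.ncard ∧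
    rk M S + rk M T < rk M M.E + k

/-- `M` is `n`-connected: it has no `k`-separation for `1 ≤ k ≤ n - 1`. -/
def NConnected (M : Matroid α) (n : ℕ) : Prop :=
  ∀ k S T, 1 ≤ k → k ≤ n - 1 → ¬ KSeparation M k S T

/-- A matroid is Eulerian if its ground set is a disjoint union of circuits. -/
def Eulerian (M : Matroid α) : Prop :=
  ∃ (n : ℕ) (D : Fin n → Set α), (∀ i, IsCircuit M (D i)) ∧
    (∀ i j, i ≠ j → Disjoint (D i) (D j)) ∧ (⋃ i, D i) = M.E

/-- `C` carries a linear dependence of the columns of `A` with all coefficients nonzero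
exactly on `C`, whose coefficients at `a` and `b` sum to zero. -/
def HasPDependence {m E F : Type*} [Semiring F] [Fintype E] (A : Matrix m E F)
    (a b : E) (C : Set E) : Prop :=
  ∃ c : E → F, (∀ x, x ∈ C ↔ c x ≠ 0) ∧ (∑ x, c x • Aᵀ x) = 0 ∧ c a + c b = 0

/-- A `p`-circuit of the vector matroid `M = M[A]` with respect to `a, b`. -/
def IsPCircuit {m E F : Type*} [Semiring F] [Fintype E] (M : Matroid E) (A : Matrix m E F)
    (a b : E) (C : Set E) : Prop :=
  IsCircuit M C ∧ a ∈ C ∧ b ∈ C ∧ HasPDependence A a b C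

/-- An `np`-circuit: a circuit meeting `{a, b}` that is not a `p`-circuit. -/
def IsNpCircuit {m E F : Type*} [Semiring F] [Fintype E] (M : Matroid E) (A : Matrix m E F)
    (a b : E) (C : Set E) : Prop :=
  IsCircuit M C ∧ (C ∩ {a, b}).Nonempty ∧ ¬ HasPDependence A a b C

/-!
Deleting the last row of `A^e_{a,b}` maps the column of each `x ∈ E` to the column of `x` in `A`,
and its kernel is spanned by `z`. Hence `I` is independent in `M` iff `I ∪ {z}` is independent in
`M^e_{a,b}`, so every circuit of `M` extends to a circuit of `M^e_{a,b}` by possibly adding `z`, and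
any two elements of `E` share a circuit of `M^e_{a,b}`. Since `e = z + γ` with `e, z, γ` pairwise
independent, `{e, z, γ}` is a circuit. So every element shares a circuit with `e`, and sharing a
circuit is transitive (Whitney; a consequence of strong circuit elimination).
-/

section LinearAlgebra

variable {K V W ι : Type*} [Field K] [AddCommGroup V] [Module K V] [AddCommGroup W] [Module K W]

theorem linearIndepOn_comp_iff_of_ker_eq_span (π : V →ₗ[K] W) {v : V} (hv : v ≠ 0)
    (hker : LinearMap.ker π = K ∙ v) (g : ι → V) (s : Set ι) :
    LinearIndepOn K (π ∘ g) s ↔ LinearIndepOn K g s ∧ v ∉ Submodule.span K (g '' s) := by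
  rw [← Submodule.disjoint_span_singleton' hv, ← hker, image_eq_range]
  exact ⟨fun h ↦ ⟨h.of_comp π, Submodule.range_ker_disjoint h⟩,
    fun ⟨h, hdisj⟩ ↦ (π.linearIndependent_iff_of_disjoint hdisj).mpr h⟩

theorem linearIndepOn_pair_of_map_eq_zero_of_map_ne_zero (φ : V →ₗ[K] W) {g : ι → V} {i j : ι}
    (hi : g i ≠ 0) (hφi : φ (g i) = 0) (hφj : φ (g j) ≠ 0) : LinearIndepOn K g {i, j} := by
  have hij : i ≠ j := by rintro rfl; exact hφj hφi
  refine (linearIndepOn_pair_iff g hij hi).mpr fun c hc ↦ hφj ?_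
  rw [← hc, map_smul, hφi, smul_zero]

end LinearAlgebra

theorem isCircuit_iff_matroid_isCircuit {M : Matroid α} {C : Set α} :
    IsCircuit M C ↔ M.IsCircuit C :=
  Matroid.isCircuit_iff_forall_ssubset.symm

namespace Matroid

variable {β : Type*} {M : Matroid α} {C C₁ C₂ : Set α} {x z : α}

theorem IsCircuit.exists_isCircuit_of_inter_nonempty [M.Finitary] (hC₁ : M.IsCircuit C₁)
    (hC₂ : M.IsCircuit C₂) (hx : x ∈ C₁) (hz : z ∈ C₂) (hne : (C₁ ∩ C₂).Nonempty) :
    ∃ C, M.IsCircuit C ∧ x ∈ C ∧ z ∈ C := by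
  -- Induction on `|C₂ \ C₁|`: eliminating through `C₁ ∩ C₂` and then through a new element of
  -- `C₂ \ C₁` yields a circuit through `z` that meets `C₁` and has fewer elements outside `C₁`.
  induction hn : (C₂ \ C₁).ncard using Nat.strong_induction_on generalizing C₂ with
  | _ n ih =>
  by_cases hz₁ : z ∈ C₁
  · exact ⟨C₁, hC₁, hx, hz₁⟩
  by_cases hx₂ : x ∈ C₂
  · exact ⟨C₂, hC₂, hx₂, hz⟩
  obtain ⟨w, hw₁, hw₂⟩ := hne
  obtain ⟨C₃, hC₃ss, hC₃, hxC₃⟩ := hC₁.strong_elimination hC₂ hw₁ hw₂ hx hx₂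
  by_cases hz₃ : z ∈ C₃
  · exact ⟨C₃, hC₃, hxC₃, hz₃⟩
  obtain ⟨g, hg₃, hg₁⟩ : ∃ g ∈ C₃, g ∉ C₁ := by
    by_contra! h
    exact hC₁.not_ssubset hC₃ (ssubset_of_subset_of_ne h (by rintro rfl; exact (hC₃ss hw₁).2 rfl))
  have hg₂ : g ∈ C₂ := (hC₃ss hg₃).1.resolve_left hg₁
  obtain ⟨C₄, hC₄ss, hC₄, hzC₄⟩ := hC₂.strong_elimination hC₃ hg₂ hg₃ hz hz₃
  have hC₄C₁ : C₄ \ C₁ ⊆ (C₂ \ C₁) \ {g} := by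
    rintro y ⟨hy₄, hy₁⟩
    obtain ⟨hy | hy, hyg⟩ := hC₄ss hy₄
    · exact ⟨⟨hy, hy₁⟩, hyg⟩
    · exact ⟨⟨(hC₃ss hy).1.resolve_left hy₁, hy₁⟩, hyg⟩
  have hlt : (C₄ \ C₁).ncard < n := by
    rw [← hn]
    refine (ncard_le_ncard hC₄C₁ hC₂.finite.sdiff.sdiff).trans_lt ?_
    exact ncard_sdiff_singleton_lt_of_mem ⟨hg₂, hg₁⟩ hC₂.finite.sdiff
  have hne₄ : (C₁ ∩ C₄).Nonempty := by
    by_contra! h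
    refine hC₂.not_ssubset hC₄ (ssubset_of_subset_of_ne (fun y hy ↦ ?_) ?_)
    · exact (hC₄C₁ ⟨hy, fun hy₁ ↦ h.subset ⟨hy₁, hy⟩⟩).1.1
    · rintro rfl
      exact (hC₄ss hg₂).2 rfl
  exact ih _ hlt hC₄ hzC₄ hne₄ rfl

theorem IsCircuit.exists_isCircuit_image_subset {N : Matroid β} {f : α → β} {b : β}
    (hMN : ∀ I, M.Indep I ↔ N.Indep (insert b (f '' I))) (hC : M.IsCircuit C)
    (hE : insert b (f '' C) ⊆ N.E) : ∃ C', N.IsCircuit C' ∧ f '' C ⊆ C' := by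
  obtain ⟨C', hC'ss, hC'⟩ :=
    Dep.exists_isCircuit_subset ⟨fun h ↦ hC.not_indep ((hMN C).mpr h), hE⟩
  refine ⟨C', hC', ?_⟩
  rintro _ ⟨y, hy, rfl⟩
  by_contra hyC'
  refine hC'.not_indep (((hMN _).mp (hC.ssubset_indep (sdiff_singleton_ssubset.mpr hy))).subset ?_)
  intro u hu
  obtain rfl | ⟨x, hx, rfl⟩ := hC'ss hu
  · exact mem_insert _ _
  · exact mem_insert_of_mem _ ⟨x, ⟨hx, by rintro rfl; exact hyC' hu⟩, rfl⟩

theorem isCircuit_triple_of_indep_pairs {i j k : α} (hdep : M.Dep {i, j, k})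
    (hij : M.Indep {i, j}) (hik : M.Indep {i, k}) (hjk : M.Indep {j, k}) :
    M.IsCircuit {i, j, k} := by
  refine isCircuit_iff_dep_forall_sdiff_singleton_indep.mpr ⟨hdep, ?_⟩
  rintro x (rfl | rfl | rfl)
  · exact hjk.subset fun y ⟨hy, hyx⟩ ↦ by grind
  · exact hik.subset fun y ⟨hy, hyx⟩ ↦ by grind
  · exact hij.subset fun y ⟨hy, hyx⟩ ↦ by grind

end Matroid

theorem colIndep_iff_linearIndepOn {m E F : Type*} [Semiring F] {A : Matrix m E F} {S : Set E} :
    ColIndep A S ↔ LinearIndepOn F (fun j ↦ Aᵀ j) S :=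
  Iff.rfl

theorem zColumn_ne_zero {m F : Type*} [Zero F] {α : F} (hα : α ≠ 0) : zColumn (m := m) α ≠ 0 :=
  fun h ↦ hα (congrFun h (Sum.inr ()))

section EsSplitting

variable {m E F : Type*} [Field F] [DecidableEq E] (A : Matrix m E F) (a b e : E) (α : F)

theorem funLeft_inl_zColumn : LinearMap.funLeft F F Sum.inl (zColumn (m := m) α) = 0 := by
  ext i; simp [zColumn]

theorem ker_funLeft_inl_eq_span_zColumn (hα : α ≠ 0) :
    LinearMap.ker (LinearMap.funLeft F F (Sum.inl : m → m ⊕ Unit)) = F ∙ zColumn α := by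
  ext v
  rw [LinearMap.mem_ker, Submodule.mem_span_singleton]
  constructor
  · intro hv
    refine ⟨v (Sum.inr ()) * α⁻¹, funext fun i ↦ ?_⟩
    rcases i with i | ⟨⟩
    · simpa [zColumn] using (congrFun hv i).symm
    · simp [zColumn, hα]
  · rintro ⟨c, rfl⟩
    rw [map_smul, funLeft_inl_zColumn, smul_zero]

theorem esMatrix_transpose_inr_zero : (esMatrix A a b e α)ᵀ (Sum.inr 0) = zColumn α := by
  ext i; simp [esMatrix]

theorem esMatrix_transpose_inl_self :
    (esMatrix A a b e α)ᵀ (Sum.inl e) = zColumn α + (esMatrix A a b e α)ᵀ (Sum.inr 1) := by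
  ext i; simp [esMatrix]

theorem funLeft_inl_esMatrix_transpose_inl (x : E) :
    LinearMap.funLeft F F Sum.inl ((esMatrix A a b e α)ᵀ (Sum.inl x)) = Aᵀ x := by
  ext i; simp [esMatrix, splitMatrix]

theorem funLeft_inl_esMatrix_transpose_inr_one :
    LinearMap.funLeft F F Sum.inl ((esMatrix A a b e α)ᵀ (Sum.inr 1)) = Aᵀ e := by
  ext i; simp [esMatrix, splitMatrix, zColumn]

theorem esMatrix_inr_inr_one (he : e = a ∨ e = b) :
    esMatrix A a b e α (Sum.inr ()) (Sum.inr 1) = 0 := by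
  simp [esMatrix, splitMatrix, zColumn, he]

theorem esMatrix_inr_inl_self (he : e = a ∨ e = b) :
    esMatrix A a b e α (Sum.inr ()) (Sum.inl e) = α := by
  simp [esMatrix, splitMatrix, he]

theorem colIndep_esMatrix_insert_inr_zero_image_inl_iff (hα : α ≠ 0) (I : Set E) :
    ColIndep (esMatrix A a b e α) (insert (Sum.inr 0) (Sum.inl '' I)) ↔ ColIndep A I := by
  have hcomp : LinearMap.funLeft F F Sum.inl ∘ (fun j ↦ (esMatrix A a b e α)ᵀ j) ∘ Sum.inl =
      fun x ↦ Aᵀ x :=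
    funext (funLeft_inl_esMatrix_transpose_inl A a b e α)
  rw [colIndep_iff_linearIndepOn, colIndep_iff_linearIndepOn, linearIndepOn_insert (by simp),
    ← hcomp, linearIndepOn_comp_iff_of_ker_eq_span _ (zColumn_ne_zero hα)
      (ker_funLeft_inl_eq_span_zColumn α hα), esMatrix_transpose_inr_zero, image_comp]
  exact and_congr_left' ⟨fun h ↦ h.comp_of_image Sum.inl_injective.injOn,
    fun h ↦ h.image_of_comp _ _⟩

theorem isCircuit_esMatrix_triangle {M' : Matroid (E ⊕ Fin 2)}
    (hM' : IsVectorMatroid M' (esMatrix A a b e α)) (he : e = a ∨ e = b) (hα : α ≠ 0)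
    (hAe : Aᵀ e ≠ 0) : M'.IsCircuit {Sum.inr 1, Sum.inr 0, Sum.inl e} := by
  have hγ : (esMatrix A a b e α)ᵀ (Sum.inr 1) ≠ 0 := fun h ↦ hAe <| by
    rw [← funLeft_inl_esMatrix_transpose_inr_one A a b e α, h, map_zero]
  refine Matroid.isCircuit_triple_of_indep_pairs ⟨fun h ↦ ?_, hM'.1 ▸ subset_univ _⟩
    ((hM'.2 _).mpr ?_) ((hM'.2 _).mpr ?_) ((hM'.2 _).mpr ?_)
  · rw [hM'.2, colIndep_iff_linearIndepOn] at h
    refine ((linearIndepOn_insert (by simp)).mp h).2 ?_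
    rw [image_pair, eq_sub_of_add_eq' (esMatrix_transpose_inl_self A a b e α).symm,
      esMatrix_transpose_inr_zero]
    exact sub_mem (Submodule.subset_span (by simp)) (Submodule.subset_span (by simp))
  · refine linearIndepOn_pair_of_map_eq_zero_of_map_ne_zero (LinearMap.proj (Sum.inr ())) hγ ?_ ?_
    · exact esMatrix_inr_inr_one A a b e α he
    · simpa [esMatrix_transpose_inr_zero, zColumn] using hα
  · refine linearIndepOn_pair_of_map_eq_zero_of_map_ne_zero (LinearMap.proj (Sum.inr ())) hγ ?_ ?_
    · exact esMatrix_inr_inr_one A a b e α he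
    · simpa [esMatrix_inr_inl_self A a b e α he] using hα
  · refine linearIndepOn_pair_of_map_eq_zero_of_map_ne_zero (LinearMap.funLeft F F Sum.inl) ?_ ?_ ?_
    · simpa [esMatrix_transpose_inr_zero] using zColumn_ne_zero hα
    · simpa [esMatrix_transpose_inr_zero] using funLeft_inl_zColumn α
    · simpa [funLeft_inl_esMatrix_transpose_inl] using hAe

end EsSplitting

variable {m E : Type*} [Fintype m] [Fintype E] [DecidableEq E] {p : ℕ} [Fact p.Prime]

theorem esSplitting_connected_general (A : Matrix m E (ZMod p)) (a b e : E)
    (he : e = a ∨ e = b) (α : ZMod p) (hα : α ≠ 0)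
    (M : Matroid E) (hM : IsVectorMatroid M A)
    (hs : SimpleMatroid M) (hconn : ConnectedMatroid M)
    (M' : Matroid (E ⊕ Fin 2)) (hM' : IsVectorMatroid M' (esMatrix A a b e α)) :
    ConnectedMatroid M' := by
  have hlift : ∀ I, M.Indep I ↔ M'.Indep (insert (Sum.inr 0) (Sum.inl '' I)) := fun I ↦ by
    rw [hM.2, hM'.2, colIndep_esMatrix_insert_inr_zero_image_inl_iff A a b e α hα]
  have hAe : Aᵀ e ≠ 0 := (linearIndepOn_singleton_iff _).mp <|
    (hM.2 _).mp (hs {e} (hM.1 ▸ subset_univ _) (by simp))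
  have hT := isCircuit_esMatrix_triangle A a b e α hM' he hα hAe
  have hinl : ∀ u v, u ≠ v → ∃ C, M'.IsCircuit C ∧ Sum.inl u ∈ C ∧ Sum.inl v ∈ C := by
    intro u v huv
    obtain ⟨C, hC, hu, hv⟩ := hconn u (hM.1 ▸ trivial) v (hM.1 ▸ trivial) huv
    obtain ⟨C', hC', hCC'⟩ := (isCircuit_iff_matroid_isCircuit.mp hC).exists_isCircuit_image_subset
      hlift (hM'.1 ▸ subset_univ _)
    exact ⟨C', hC', hCC' (mem_image_of_mem _ hu), hCC' (mem_image_of_mem _ hv)⟩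
  have hhub : ∀ x, x = Sum.inl e ∨ ∃ C, M'.IsCircuit C ∧ x ∈ C ∧ Sum.inl e ∈ C := by
    rintro (u | k)
    · obtain rfl | hue := eq_or_ne u e
      · exact Or.inl rfl
      · exact Or.inr (hinl u e hue)
    · exact Or.inr ⟨_, hT, by fin_cases k <;> simp, by simp⟩
  intro x _ y _ hxy
  simp_rw [isCircuit_iff_matroid_isCircuit]
  obtain rfl | ⟨C₁, hC₁, hx, hx₁⟩ := hhub x
  · obtain rfl | ⟨C₂, hC₂, hy, hy₂⟩ := hhub y
    · exact absurd rfl hxy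
    · exact ⟨C₂, hC₂, hy₂, hy⟩
  · obtain rfl | ⟨C₂, hC₂, hy, hy₂⟩ := hhub y
    · exact ⟨C₁, hC₁, hx, hx₁⟩
    · exact hC₁.exists_isCircuit_of_inter_nonempty hC₂ hx hy ⟨_, hx₁, hy₂⟩

theorem esSplitting_connected (A : Matrix m E (ZMod p)) (a b e : E)
    (he : e = a ∨ e = b) (α : ZMod p) (hα : α ≠ 0)
    (M : Matroid E) (hM : IsVectorMatroid M A)
    (hs : SimpleMatroid M) (hc : Coloopless M)
    (hcard : 2 ≤ M.E.ncard) (hconn : ConnectedMatroid M)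
    (M' : Matroid (E ⊕ Fin 2)) (hM' : IsVectorMatroid M' (esMatrix A a b e α)) :
    ConnectedMatroid M' :=
  esSplitting_connected_general A a b e he α hα M hM hs hconn M' hM'
end

section
/- Let M be a p-matroid containing an np-circuit C_np with |C_np| = r(M) + 1. Then the es-splitting matroid M^e_{a,b} is Hamiltonian; in particular C_np ∪ {z} is a circuit of M^e_{a,b} of size r(M^e_{a,b}) + 1 = r(M) + 2. -/
open Matrix Set

variable {α : Type*}

/-!
A circuit `C` of `M[A]` carries a dependence `c` whose support is exactly `C`. In `A^e_{a,b}`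
the same coefficients on the columns of `C` give `(∑_{x ∈ {a,b}} c x) • z`, which is nonzero
because `C` is an np-circuit; so `C ∪ {z}` is dependent. A dependence on a proper subset of
`C ∪ {z}` restricts, on the rows of `A`, to a dependence of `A` supported in `C`. Either it
vanishes, and then so does the coefficient of `z`, or its support is exactly `C`, and then the
last row forces the coefficient of `z` to be nonzero as well, so the subset is all of `C ∪ {z}`.
For the rank: since `e ∈ {a, b}`, the column `γ = e - z` is the column of `A` at `e` padded with
a zero, so the column space of `A^e_{a,b}` is that of `A`, padded with a zero coordinate, plus
the line through `z`.
-/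

open Submodule

section ColIndep

variable {m n F : Type*} [Field F] [Fintype n]

theorem mulVec_eq_sum_smul_transpose (A : Matrix m n F) (c : n → F) :
    A *ᵥ c = ∑ j, c j • Aᵀ j := by
  simp [mulVec_eq_sum]

theorem colIndep_iff {A : Matrix m n F} {S : Set n} :
    ColIndep A S ↔ ∀ c : n → F, (∀ j ∉ S, c j = 0) → A *ᵥ c = 0 → c = 0 := by
  show LinearIndepOn F (fun j => Aᵀ j) S ↔ _
  rw [linearIndepOn_iff]
  refine ⟨fun h c hcS hAc => ?_, fun h l hl hAl => ?_⟩
  · have := h (Finsupp.equivFunOnFinite.symm c) ((Finsupp.mem_supported' _ _).mpr hcS) (by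
      rw [Finsupp.linearCombination_apply, Finsupp.sum_fintype _ _ (by simp)]
      simpa [mulVec_eq_sum_smul_transpose] using hAc)
    funext j
    simpa using DFunLike.congr_fun this j
  · have := h l ((Finsupp.mem_supported' _ _).mp hl) (by
      rw [Finsupp.linearCombination_apply, Finsupp.sum_fintype _ _ (by simp)] at hAl
      rwa [mulVec_eq_sum_smul_transpose])
    exact Finsupp.ext (congrFun this)

theorem eq_zero_or_support_eq_of_forall_ssubset {A : Matrix m n F} {C : Set n}
    (hmin : ∀ D ⊂ C, ColIndep A D) {c : n → F} (hcC : ∀ j ∉ C, c j = 0) (hAc : A *ᵥ c = 0) :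
    c = 0 ∨ ∀ j, j ∈ C ↔ c j ≠ 0 := by
  by_cases hsupp : {j | c j ≠ 0} = C
  · exact Or.inr fun j => by rw [← hsupp]; rfl
  · have hsub : {j | c j ≠ 0} ⊆ C := fun j hj => by_contra fun h => hj (hcC j h)
    exact Or.inl <| colIndep_iff.mp (hmin _ (hsub.ssubset_of_ne hsupp)) c
      (fun j hj => not_not.mp hj) hAc

theorem exists_support_eq_of_not_colIndep {A : Matrix m n F} {C : Set n}
    (hdep : ¬ColIndep A C) (hmin : ∀ D ⊂ C, ColIndep A D) :
    ∃ c : n → F, (∀ j, j ∈ C ↔ c j ≠ 0) ∧ A *ᵥ c = 0 := by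
  simp only [colIndep_iff, not_forall] at hdep
  obtain ⟨c, hcC, hAc, hc⟩ := hdep
  exact ⟨c, (eq_zero_or_support_eq_of_forall_ssubset hmin hcC hAc).resolve_left hc, hAc⟩

theorem sum_pair_ne_zero_of_not_hasPDependence [DecidableEq n] {A : Matrix m n F} {a b : n}
    {C : Set n} (h : ¬HasPDependence A a b C) {c : n → F} (hc : ∀ j, j ∈ C ↔ c j ≠ 0)
    (hAc : A *ᵥ c = 0) : ∑ j ∈ {a, b}, c j ≠ 0 := by
  intro hsum
  refine h ⟨c, hc, by rwa [← mulVec_eq_sum_smul_transpose], ?_⟩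
  rcases eq_or_ne a b with rfl | hab
  · simp_all
  · rwa [Finset.sum_pair hab] at hsum

end ColIndep

section VectorMatroid

variable {m n F : Type*} [Field F] {M : Matroid n} {A : Matrix m n F}

theorem IsVectorMatroid.isCircuit_iff (hM : IsVectorMatroid M A) {C : Set n} :
    IsCircuit M C ↔ ¬ColIndep A C ∧ ∀ D ⊂ C, ColIndep A D := by
  simp only [IsCircuit, Matroid.Dep, hM.1, hM.2, subset_univ, and_true]

variable [Fintype n]

theorem ColIndep.ncard_le_rank {I : Set n} (hI : ColIndep A I) : I.ncard ≤ A.rank := by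
  have : Fintype I := I.toFinite.fintype
  have : Module.Finite F (span F (range A.col)) := Module.Finite.span_of_finite F (finite_range _)
  rw [rank_eq_finrank_span_cols, Set.ncard_eq_toFinset_card', Set.toFinset_card,
    ← finrank_span_eq_card hI]
  exact Submodule.finrank_mono (span_mono (range_subset_iff.mpr fun i => mem_range_self _))

theorem exists_colIndep_ncard_eq_rank (A : Matrix m n F) :
    ∃ I : Set n, ColIndep A I ∧ I.ncard = A.rank := by
  obtain ⟨I, -, -, hspan, hI⟩ := exists_linearIndepOn_extension (v := A.col)
    (linearIndepOn_empty F _) (empty_subset univ)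
  have : Fintype I := I.toFinite.fintype
  have hspan' : span F (A.col '' I) = span F (range A.col) := by
    refine le_antisymm (span_mono (image_subset_range _ _)) (span_le.mpr ?_)
    rwa [← image_univ]
  refine ⟨I, hI, ?_⟩
  rw [rank_eq_finrank_span_cols, ← hspan', image_eq_range, finrank_span_eq_card hI,
    Set.ncard_eq_toFinset_card', Set.toFinset_card]

theorem IsVectorMatroid.rk_eq_rank (hM : IsVectorMatroid M A) : rk M M.E = A.rank := by
  have hbdd : ∀ k ∈ {k | ∃ I, I ⊆ M.E ∧ M.Indep I ∧ I.ncard = k}, k ≤ A.rank := by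
    rintro _ ⟨I, -, hI, rfl⟩
    exact ((hM.2 I).mp hI).ncard_le_rank
  obtain ⟨I, hI, hcard⟩ := exists_colIndep_ncard_eq_rank A
  have hmem : A.rank ∈ {k | ∃ I, I ⊆ M.E ∧ M.Indep I ∧ I.ncard = k} :=
    ⟨I, by simp [hM.1], (hM.2 I).mpr hI, hcard⟩
  exact le_antisymm (csSup_le ⟨_, hmem⟩ hbdd) (le_csSup ⟨_, hbdd⟩ hmem)

end VectorMatroid

section EsMatrix

variable {m E F : Type*} [Field F] [DecidableEq E]

def zeroExtend (m F : Type*) [Field F] : (m → F) →ₗ[F] (m ⊕ Unit → F) where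
  toFun v := Sum.elim v 0
  map_add' v w := by ext (i | i) <;> simp
  map_smul' c v := by ext (i | i) <;> simp

theorem zeroExtend_injective : Function.Injective (zeroExtend m F) :=
  fun _ _ h => funext fun i => congrFun h (Sum.inl i)

theorem zeroExtend_add_smul_zColumn_eq_zero_iff {α : F} (hα : α ≠ 0) {v : m → F} {t : F} :
    zeroExtend m F v + t • zColumn α = 0 ↔ v = 0 ∧ t = 0 := by
  refine ⟨fun h => ⟨funext fun i => by simpa [zeroExtend, zColumn] using congrFun h (Sum.inl i),
    by simpa [zeroExtend, zColumn, hα] using congrFun h (Sum.inr ())⟩, ?_⟩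
  rintro ⟨rfl, rfl⟩
  simp

theorem zColumn_notMem_map_zeroExtend {α : F} (hα : α ≠ 0) (W : Submodule F (m → F)) :
    zColumn α ∉ W.map (zeroExtend m F) := by
  rintro ⟨v, -, hv⟩
  exact hα (congrFun hv (Sum.inr ())).symm

theorem esMatrix_col_inl (A : Matrix m E F) (a b e : E) (α : F) (x : E) :
    (esMatrix A a b e α).col (Sum.inl x) =
      zeroExtend m F (A.col x) + (if x = a ∨ x = b then 1 else 0 : F) • zColumn α := by
  ext (i | i) <;> by_cases h : x = a ∨ x = b <;>
    simp [esMatrix, splitMatrix, zColumn, zeroExtend, h]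

theorem esMatrix_col_inr_zero (A : Matrix m E F) (a b e : E) (α : F) :
    (esMatrix A a b e α).col (Sum.inr 0) = zColumn α := by
  ext (i | i) <;> simp [esMatrix, zColumn]

theorem esMatrix_col_inr_one (A : Matrix m E F) {a b e : E} (he : e = a ∨ e = b) (α : F) :
    (esMatrix A a b e α).col (Sum.inr 1) = zeroExtend m F (A.col e) := by
  ext (i | i) <;> simp [esMatrix, splitMatrix, zColumn, zeroExtend, he]

theorem esMatrix_mulVec [Fintype E] (A : Matrix m E F) (a b e : E) (α : F)
    {d : E ⊕ Fin 2 → F} (hd : d (Sum.inr 1) = 0) :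
    esMatrix A a b e α *ᵥ d =
      zeroExtend m F (A *ᵥ (d ∘ Sum.inl)) +
        (∑ x ∈ {a, b}, d (Sum.inl x) + d (Sum.inr 0)) • zColumn α := by
  ext (i | i)
  · simp [mulVec, dotProduct, Fintype.sum_sum_type, esMatrix, splitMatrix, zColumn, zeroExtend, hd]
  · have hpair (f : E → F) : ∑ x, (if x = a ∨ x = b then f x else 0) = ∑ x ∈ {a, b}, f x := by
      rw [← Finset.sum_filter]
      congr 1
      ext x
      simp
    simp [mulVec, dotProduct, Fintype.sum_sum_type, esMatrix, splitMatrix, zColumn, zeroExtend, hd,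
      hpair]
    rw [← Finset.mul_sum]
    ring

theorem span_range_esMatrix_col (A : Matrix m E F) {a b e : E} (he : e = a ∨ e = b) (α : F) :
    span F (range (esMatrix A a b e α).col) =
      (span F (range A.col)).map (zeroExtend m F) ⊔ span F {zColumn α} := by
  rw [map_span, sup_comm, ← span_insert]
  refine span_eq_span (range_subset_iff.mpr ?_) (insert_subset ?_ ?_)
  · rintro (x | k)
    · rw [esMatrix_col_inl]
      exact add_mem (subset_span (mem_insert_of_mem _ (mem_image_of_mem _ (mem_range_self x))))
        (smul_mem _ _ (subset_span (mem_insert _ _)))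
    · revert k
      refine Fin.forall_fin_two.mpr ⟨?_, ?_⟩
      · rw [esMatrix_col_inr_zero]
        exact subset_span (mem_insert _ _)
      · rw [esMatrix_col_inr_one A he]
        exact subset_span (mem_insert_of_mem _ (mem_image_of_mem _ (mem_range_self e)))
  · rw [← esMatrix_col_inr_zero A a b e α]
    exact subset_span (mem_range_self _)
  · rintro _ ⟨_, ⟨x, rfl⟩, rfl⟩
    rw [eq_sub_of_add_eq (esMatrix_col_inl A a b e α x).symm, ← esMatrix_col_inr_zero A a b e α]
    exact sub_mem (subset_span (mem_range_self _)) (smul_mem _ _ (subset_span (mem_range_self _)))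

theorem rank_esMatrix [Fintype m] [Fintype E] (A : Matrix m E F) {a b e : E}
    (he : e = a ∨ e = b) {α : F} (hα : α ≠ 0) : (esMatrix A a b e α).rank = A.rank + 1 := by
  rw [rank_eq_finrank_span_cols, span_range_esMatrix_col A he,
    finrank_sup_span_singleton (zColumn_notMem_map_zeroExtend hα _), rank_eq_finrank_span_cols,
    (equivMapOfInjective _ zeroExtend_injective (span F (range A.col))).finrank_eq]

end EsMatrix

section EsCircuit

variable {m E F : Type*} [Field F] [DecidableEq E] [Fintype E] {A : Matrix m E F} {a b e : E}
  {C : Set E}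

theorem not_colIndep_esMatrix (α : F) (hdep : ¬ColIndep A C) (hmin : ∀ D ⊂ C, ColIndep A D)
    (hnp : ¬HasPDependence A a b C) :
    ¬ColIndep (esMatrix A a b e α) (Sum.inl '' C ∪ {Sum.inr 0}) := by
  obtain ⟨c, hcC, hAc⟩ := exists_support_eq_of_not_colIndep hdep hmin
  have hs := sum_pair_ne_zero_of_not_hasPDependence hnp hcC hAc
  set d : E ⊕ Fin 2 → F := Sum.elim c (Pi.single 0 (-∑ x ∈ {a, b}, c x))
  have hd1 : d (Sum.inr 1) = 0 := by simp [d]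
  simp only [colIndep_iff, not_forall]
  refine ⟨d, ?_, ?_, fun hd0 => hs (by simpa [d] using congrFun hd0 (Sum.inr 0))⟩
  · rintro (x | k) hy
    · exact not_not.mp fun hx => hy (Or.inl ⟨x, (hcC x).mpr hx, rfl⟩)
    · exact Pi.single_eq_of_ne (fun hk => hy (Or.inr (congrArg Sum.inr hk))) _
  · rw [esMatrix_mulVec A a b e α hd1]
    simp [d, hAc]

theorem colIndep_esMatrix_of_ssubset {α : F} (hα : α ≠ 0) (hmin : ∀ D ⊂ C, ColIndep A D)
    (hnp : ¬HasPDependence A a b C) {D : Set (E ⊕ Fin 2)}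
    (hD : D ⊂ Sum.inl '' C ∪ {Sum.inr 0}) : ColIndep (esMatrix A a b e α) D := by
  rw [colIndep_iff]
  intro d hdD hd0
  have hd1 : d (Sum.inr 1) = 0 := hdD _ fun h => by simpa using hD.subset h
  rw [esMatrix_mulVec A a b e α hd1, zeroExtend_add_smul_zColumn_eq_zero_iff hα] at hd0
  obtain ⟨hAd, hsum⟩ := hd0
  have hdC : ∀ x ∉ C, (d ∘ Sum.inl) x = 0 := fun x hx =>
    hdD _ fun h => hx (by simpa using hD.subset h)
  rcases eq_zero_or_support_eq_of_forall_ssubset hmin hdC hAd with hzero | hfull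
  · have hinl : ∀ x, d (Sum.inl x) = 0 := congrFun hzero
    simp only [hinl, Finset.sum_const_zero, zero_add] at hsum
    funext y
    rcases y with x | k
    · exact hinl x
    · revert k
      exact Fin.forall_fin_two.mpr ⟨hsum, hd1⟩
  · have hs := sum_pair_ne_zero_of_not_hasPDependence hnp hfull hAd
    have hz : d (Sum.inr 0) ≠ 0 := fun h0 => hs (by simpa [h0] using hsum)
    refine absurd ?_ hD.2
    rintro _ (⟨x, hx, rfl⟩ | rfl)
    · exact by_contra fun h => (hfull x).mp hx (hdD _ h)
    · exact by_contra fun h => hz (hdD _ h)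

end EsCircuit

theorem ncard_image_inl_union_singleton_inr {α β : Type*} {C : Set α} (hC : C.Finite) (y : β) :
    (Sum.inl '' C ∪ {Sum.inr y} : Set (α ⊕ β)).ncard = C.ncard + 1 := by
  rw [union_singleton, ncard_insert_of_notMem (by simp) (hC.image _),
    ncard_image_of_injective _ Sum.inl_injective]

variable {m E : Type*} [Fintype m] [Fintype E] [DecidableEq E] {p : ℕ} [Fact p.Prime]

theorem esSplitting_hamiltonian (A : Matrix m E (ZMod p)) (a b e : E)
    (he : e = a ∨ e = b) (α : ZMod p) (hα : α ≠ 0)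
    (M : Matroid E) (hM : IsVectorMatroid M A)
    (M' : Matroid (E ⊕ Fin 2)) (hM' : IsVectorMatroid M' (esMatrix A a b e α))
    (Cnp : Set E) (hnp : IsNpCircuit M A a b Cnp)
    (hcard : Cnp.ncard = rk M M.E + 1) :
    IsCircuit M' (Sum.inl '' Cnp ∪ {Sum.inr 0}) ∧
      (Sum.inl '' Cnp ∪ {Sum.inr 0} : Set (E ⊕ Fin 2)).ncard = rk M' M'.E + 1 ∧
      rk M' M'.E = rk M M.E + 1 := by
  obtain ⟨hCnp, -, hnotP⟩ := hnp
  obtain ⟨hdep, hmin⟩ := hM.isCircuit_iff.mp hCnp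
  have hrank : rk M' M'.E = rk M M.E + 1 := by
    rw [hM'.rk_eq_rank, hM.rk_eq_rank, rank_esMatrix A he hα]
  refine ⟨hM'.isCircuit_iff.mpr ⟨not_colIndep_esMatrix α hdep hmin hnotP,
    fun D hD => colIndep_esMatrix_of_ssubset hα hmin hnotP hD⟩, ?_, hrank⟩
  rw [ncard_image_inl_union_singleton_inr Cnp.toFinite, hcard, hrank]
end
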